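/- arXiv:math-ph/0603060 — 3 statements merged into one kernel-verified Lean document; each statement's English description precedes it below -/
import Mathlib

section
/- Riccati-type decay estimate: Let N ≥ 1 be an integer and let c₀ > 0, C₁ ≥ 0, T₀ ≥ 1, X₀ ≥ 0 be real numbers. Then there exists a constant c > 0, depending only on N, c₀, C₁ and X₀, with the following property: if β : [0,∞) → ℂ is continuously differentiable, satisfies |β(0)| ≤ X₀·T₀^{−1/(2N)}, and for all t ≥ 0 the differential inequality (1/2) d/dt |β(t)|² = Re( conj(β(t)) · β'(t) ) ≤ −c₀ |β(t)|^{2N+2} + C₁ (T₀+t)^{−(2N+2)/(2N)} |β(t)| holds, then |β(t)| ≤ c (T₀+t)^{−1/(2N)} for all t ≥ 0. -/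
/-!
Compare `‖β‖²` with `g²`, where `g(t) = c (T₀ + t)^(-a)` and `a = 1/(2N)`, using the fencing theorem
`image_le_of_deriv_right_lt_deriv_boundary'`: it suffices that `2 Re(β̄ β') < (g²)'` wherever
`‖β‖ = g`. There, with `x = T₀ + t`, the damping term is `-c₀ c^(2N+2) x^(-a(2N+2))`, which, as
`2Na = 1`, is `g · x^(-a-1)` times a constant, like `(g²)' = -2a c² x^(-2a-1)`; the forcing term is
at most `C₁ g x^(-a-1)`. The inequality thus reduces to one between constants, which holds once
`c ≥ 1` and `c₀ c ≥ C₁ + 1`; taking also `c ≥ X₀` starts `β` below the barrier.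
-/

theorem HasDerivAt.complex_norm_sq {β : ℝ → ℂ} {β' : ℂ} {t : ℝ} (h : HasDerivAt β β' t) :
    HasDerivAt (fun s => ‖β s‖ ^ 2) (2 * ((starRingEnd ℂ) (β t) * β').re) t := by
  simpa only [Complex.inner, mul_comm β'] using h.norm_sq

theorem hasDerivAt_const_mul_add_rpow_sq (c T p : ℝ) {s : ℝ} (hs : 0 < T + s) :
    HasDerivAt (fun u => (c * (T + u) ^ p) ^ 2)
      (2 * (c * (T + s) ^ p) * (c * (p * (T + s) ^ (p - 1)))) s := by
  have h := ((Real.hasDerivAt_rpow_const (p := p) (Or.inl hs.ne')).comp s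
    ((hasDerivAt_id s).const_add T)).const_mul c
  simpa using h.fun_pow 2

theorem add_mul_lt_mul_pow {a c c₀ C₁ : ℝ} {m : ℕ} (ha : a < 1) (hC₁ : 0 ≤ C₁) (hc : 1 ≤ c)
    (hcC : C₁ + 1 ≤ c₀ * c) (hm : 2 ≤ m) : C₁ + a * c < c₀ * c ^ m := by
  have hc₀ : 0 < c₀ := by nlinarith
  calc C₁ + a * c < (C₁ + 1) * c := by nlinarith
    _ ≤ c₀ * c * c := by gcongr
    _ = c₀ * c ^ 2 := by ring
    _ ≤ c₀ * c ^ m := by gcongr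

theorem riccati_rhs_lt_at_barrier {N : ℕ} {a c₀ C₁ c x : ℝ} (hN : 1 ≤ N) (ha : 2 * N * a = 1)
    (hC₁ : 0 ≤ C₁) (hc : 1 ≤ c) (hcC : C₁ + 1 ≤ c₀ * c) (hx : 1 ≤ x) :
    -c₀ * (c * x ^ (-a)) ^ (2 * N + 2) + C₁ * x ^ (-(2 * a + 1)) * (c * x ^ (-a)) <
      c * x ^ (-a) * (c * (-a * x ^ (-a - 1))) := by
  have hN' : (1 : ℝ) ≤ N := by exact_mod_cast hN
  have ha₀ : 0 < a := by nlinarith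
  have ha₁ : a < 1 := by nlinarith
  have hg : 0 < c * x ^ (-a) := by positivity
  have hpow : (x ^ (-a)) ^ (2 * N + 1) = x ^ (-a - 1) := by
    rw [← Real.rpow_natCast, ← Real.rpow_mul (by positivity)]
    congr 1
    push_cast
    linear_combination -ha
  have hforcing : x ^ (-(2 * a + 1)) ≤ x ^ (-a - 1) :=
    Real.rpow_le_rpow_of_exponent_le hx (by linarith)
  have hconst := add_mul_lt_mul_pow (m := 2 * N + 1) ha₁ hC₁ hc hcC (by omega)
  have hy : 0 < x ^ (-a - 1) := by positivity
  calc -c₀ * (c * x ^ (-a)) ^ (2 * N + 2) + C₁ * x ^ (-(2 * a + 1)) * (c * x ^ (-a))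
      = c * x ^ (-a) * (-c₀ * c ^ (2 * N + 1) * x ^ (-a - 1) + C₁ * x ^ (-(2 * a + 1))) := by
        rw [← hpow]; ring
    _ ≤ c * x ^ (-a) * ((C₁ - c₀ * c ^ (2 * N + 1)) * x ^ (-a - 1)) :=
        mul_le_mul_of_nonneg_left (by linarith [mul_le_mul_of_nonneg_left hforcing hC₁]) hg.le
    _ < c * x ^ (-a) * (c * (-a * x ^ (-a - 1))) :=
        mul_lt_mul_of_pos_left (by nlinarith) hg

theorem norm_le_barrier_of_riccati {N : ℕ} {a c₀ C₁ c T₀ : ℝ} {β : ℝ → ℂ} (hN : 1 ≤ N)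
    (ha : 2 * N * a = 1) (hC₁ : 0 ≤ C₁) (hc : 1 ≤ c) (hcC : C₁ + 1 ≤ c₀ * c) (hT₀ : 1 ≤ T₀)
    (hβ : Differentiable ℝ β) (hβ₀ : ‖β 0‖ ≤ c * T₀ ^ (-a))
    (hode : ∀ t, 0 ≤ t → ((starRingEnd ℂ) (β t) * deriv β t).re ≤
      -c₀ * ‖β t‖ ^ (2 * N + 2) + C₁ * (T₀ + t) ^ (-(2 * a + 1)) * ‖β t‖)
    {t : ℝ} (ht : 0 ≤ t) : ‖β t‖ ≤ c * (T₀ + t) ^ (-a) := by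
  have hbarrier_nonneg (s : ℝ) (hs : 0 ≤ s) : 0 ≤ c * (T₀ + s) ^ (-a) :=
    mul_nonneg (by linarith) (Real.rpow_nonneg (by linarith) _)
  have hB (s : ℝ) (hs : 0 ≤ s) :=
    hasDerivAt_const_mul_add_rpow_sq c T₀ (-a) (by linarith : 0 < T₀ + s)
  have hsq : ‖β t‖ ^ 2 ≤ (c * (T₀ + t) ^ (-a)) ^ 2 := by
    refine image_le_of_deriv_right_lt_deriv_boundary' (f := fun s => ‖β s‖ ^ 2) (a := 0) (b := t)
      (B := fun s => (c * (T₀ + s) ^ (-a)) ^ 2)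
      (hβ.continuous.norm.pow 2).continuousOn
      (fun s _ => (hβ s).hasDerivAt.complex_norm_sq.hasDerivWithinAt)
      (pow_le_pow_left₀ (norm_nonneg _) (by simpa using hβ₀) 2)
      (fun s hs => (hB s hs.1).continuousAt.continuousWithinAt)
      (fun s hs => (hB s hs.1).hasDerivWithinAt) (fun s hs hcross => ?_) ⟨ht, le_rfl⟩
    have hnorm : ‖β s‖ = c * (T₀ + s) ^ (-a) :=
      (pow_left_inj₀ (norm_nonneg _) (hbarrier_nonneg s hs.1) two_ne_zero).1 hcross
    have hlt := riccati_rhs_lt_at_barrier hN ha hC₁ hc hcC (by linarith [hs.1] : 1 ≤ T₀ + s)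
    rw [← hnorm] at hlt ⊢
    linarith [hode s hs.1]
  exact (pow_le_pow_iff_left₀ (norm_nonneg _) (hbarrier_nonneg t ht) two_ne_zero).1 hsq

theorem riccati_decay_general (N : ℕ) (hN : 1 ≤ N) (c₀ C₁ X₀ : ℝ)
    (hc₀ : 0 < c₀) (hC₁ : 0 ≤ C₁) :
    ∃ c : ℝ, 0 < c ∧
      ∀ T₀ : ℝ, 1 ≤ T₀ →
        ∀ β : ℝ → ℂ, Differentiable ℝ β → Continuous (deriv β) →
          ‖β 0‖ ≤ X₀ * T₀ ^ (-(1 / (2 * (N : ℝ)))) →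
          (∀ t : ℝ, 0 ≤ t →
            ((starRingEnd ℂ) (β t) * deriv β t).re ≤
              -c₀ * ‖β t‖ ^ (2 * N + 2) +
                C₁ * (T₀ + t) ^ (-((2 * (N : ℝ) + 2) / (2 * (N : ℝ)))) * ‖β t‖) →
          ∀ t : ℝ, 0 ≤ t → ‖β t‖ ≤ c * (T₀ + t) ^ (-(1 / (2 * (N : ℝ)))) := by
  set a : ℝ := 1 / (2 * (N : ℝ)) with ha_def
  have hN₀ : (N : ℝ) ≠ 0 := by positivity
  have ha : 2 * N * a = 1 := by rw [ha_def]; field_simp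
  have hrate : (2 * (N : ℝ) + 2) / (2 * N) = 2 * a + 1 := by
    field_simp; linear_combination -ha
  set c := max 1 (max X₀ ((C₁ + 1) / c₀))
  have hc : 1 ≤ c := le_max_left _ _
  have hcC : C₁ + 1 ≤ c₀ * c := (div_le_iff₀' hc₀).1 ((le_max_right _ _).trans (le_max_right _ _))
  refine ⟨c, by positivity, fun T₀ hT₀ β hβ _ hβ₀ hode t ht ↦
    norm_le_barrier_of_riccati hN ha hC₁ hc hcC hT₀ hβ (hβ₀.trans ?_)
      (by simpa only [hrate] using hode) ht⟩
  exact mul_le_mul_of_nonneg_right ((le_max_left _ _).trans (le_max_right _ _))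
    (Real.rpow_nonneg (by linarith) _)

/-- Riccati-type decay estimate: if `(1/2) d/dt |β|² = Re(β̄ β') ≤ -c₀|β|^{2N+2}
+ C₁(T₀+t)^{-(2N+2)/(2N)}|β|` and `|β(0)| ≤ X₀ T₀^{-1/(2N)}`, then
`|β(t)| ≤ c (T₀+t)^{-1/(2N)}` with `c` depending only on `N, c₀, C₁, X₀`. -/
theorem riccati_decay (N : ℕ) (hN : 1 ≤ N) (c₀ C₁ X₀ : ℝ)
    (hc₀ : 0 < c₀) (hC₁ : 0 ≤ C₁) (hX₀ : 0 ≤ X₀) :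
    ∃ c : ℝ, 0 < c ∧
      ∀ T₀ : ℝ, 1 ≤ T₀ →
        ∀ β : ℝ → ℂ, Differentiable ℝ β → Continuous (deriv β) →
          ‖β 0‖ ≤ X₀ * T₀ ^ (-(1 / (2 * (N : ℝ)))) →
          (∀ t : ℝ, 0 ≤ t →
            ((starRingEnd ℂ) (β t) * deriv β t).re ≤
              -c₀ * ‖β t‖ ^ (2 * N + 2) +
                C₁ * (T₀ + t) ^ (-((2 * (N : ℝ) + 2) / (2 * (N : ℝ)))) * ‖β t‖) →
          ∀ t : ℝ, 0 ≤ t → ‖β t‖ ≤ c * (T₀ + t) ^ (-(1 / (2 * (N : ℝ)))) :=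
  riccati_decay_general N hN c₀ C₁ X₀ hc₀ hC₁
end

section
/- Convolution integral estimate with kernel (t−s)^{−1/2}: For every real δ with 0 < δ < 1/2 there exists a constant c > 0, depending only on δ, such that for every T₀ ≥ 1 and every t ≥ 0 one has ∫₀ᵗ (t − s)^{−1/2} (T₀ + s)^{−1/2−δ} ds ≤ c (T₀ + t)^{−δ}. -/
open MeasureTheory intervalIntegral Set

private lemma kernel_intble (t a b : ℝ) :
    IntervalIntegrable (fun s => (t - s) ^ (-(1 / 2) : ℝ)) volume a b := by
  have h := intervalIntegral.intervalIntegrable_rpow' (a := t - a) (b := t - b)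
    (r := (-(1 / 2) : ℝ)) (by norm_num)
  simpa using h.comp_sub_left t

private lemma kernel_val (t a b : ℝ) :
    (∫ s in a..b, (t - s) ^ (-(1 / 2) : ℝ))
      = ((t - a) ^ ((1 : ℝ) / 2) - (t - b) ^ ((1 : ℝ) / 2)) / (1 / 2) := by
  rw [intervalIntegral.integral_comp_sub_left (fun y => y ^ (-(1 / 2) : ℝ)) t,
    integral_rpow (Or.inl (by norm_num))]
  norm_num

private lemma weight_intble (T a b r : ℝ) (hr : -1 < r) :
    IntervalIntegrable (fun s => (T + s) ^ r) volume a b := by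
  have h := intervalIntegral.intervalIntegrable_rpow' (a := T + a) (b := T + b) hr
  simpa using h.comp_add_left T

private lemma weight_val (T a b r : ℝ) (hr : -1 < r) :
    (∫ s in a..b, (T + s) ^ r) = ((T + b) ^ (r + 1) - (T + a) ^ (r + 1)) / (r + 1) := by
  rw [intervalIntegral.integral_comp_add_left (fun y => y ^ r) T,
    integral_rpow (Or.inl hr)]

private lemma prod_intble {t T₀ a b δ : ℝ} (h0a : 0 ≤ a) (hbt : b ≤ t) (hab : a ≤ b)
    (hT : 1 ≤ T₀) (hδ : 0 ≤ δ) (hδ2 : δ < 1/2) :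
    IntervalIntegrable
      (fun s => (t - s) ^ (-(1 / 2) : ℝ) * (T₀ + s) ^ (-(1 / 2) - δ)) volume a b := by
  apply (kernel_intble t a b).mono_fun
  · rw [Set.uIoc_of_le hab]
    exact ((kernel_intble t a b).aestronglyMeasurable).mul
      ((weight_intble T₀ a b (-(1 / 2) - δ) (by linarith)).aestronglyMeasurable)
  · rw [Set.uIoc_of_le hab]
    filter_upwards [ae_restrict_mem measurableSet_Ioc] with s hs
    have h1 : 0 ≤ t - s := by linarith [hs.2]
    have h2 : (1 : ℝ) ≤ T₀ + s := by linarith [hs.1]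
    have h3 : (0:ℝ) ≤ (t - s) ^ (-(1 / 2) : ℝ) := Real.rpow_nonneg h1 _
    have h4 : (0:ℝ) ≤ (T₀ + s) ^ (-(1 / 2) - δ) := Real.rpow_nonneg (by linarith) _
    rw [Real.norm_eq_abs, Real.norm_eq_abs, abs_of_nonneg (by positivity),
      abs_of_nonneg h3]
    calc (t - s) ^ (-(1 / 2) : ℝ) * (T₀ + s) ^ (-(1 / 2) - δ)
        ≤ (t - s) ^ (-(1 / 2) : ℝ) * 1 := by
          exact mul_le_mul_of_nonneg_left
            (Real.rpow_le_one_of_one_le_of_nonpos h2 (by linarith)) h3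
      _ = (t - s) ^ (-(1 / 2) : ℝ) := mul_one _

private lemma four_rpow_half : (4 : ℝ) ^ ((1 : ℝ) / 2) = 2 := by
  rw [show (4 : ℝ) = 2 ^ (2 : ℕ) by norm_num, ← Real.rpow_natCast 2 2,
    ← Real.rpow_mul (by norm_num : (0:ℝ) ≤ 2)]
  norm_num

set_option maxHeartbeats 1000000 in
/-- Convolution integral estimate with kernel `(t-s)^{-1/2}`: for `0 < δ < 1/2` there
is `c > 0` (depending only on `δ`) with
`∫₀ᵗ (t-s)^{-1/2} (T₀+s)^{-1/2-δ} ds ≤ c (T₀+t)^{-δ}` for all `T₀ ≥ 1`, `t ≥ 0`. -/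
theorem convolution_estimate_half (δ : ℝ) (hδ0 : 0 < δ) (hδ : δ < 1 / 2) :
    ∃ c : ℝ, 0 < c ∧
      ∀ T₀ : ℝ, 1 ≤ T₀ → ∀ t : ℝ, 0 ≤ t →
        (∫ s in (0:ℝ)..t, (t - s) ^ (-(1 / 2) : ℝ) * (T₀ + s) ^ (-(1 / 2) - δ)) ≤
          c * (T₀ + t) ^ (-δ) := by
  have hd2 : (0:ℝ) < 1 / 2 - δ := by linarith
  refine ⟨4 + 2 / (1 / 2 - δ), by positivity, ?_⟩
  intro T₀ hT₀ t ht
  have hTpos : (0:ℝ) < T₀ := by linarith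
  have hTt : (0:ℝ) < T₀ + t := by linarith
  have hTtneg : (0:ℝ) ≤ (T₀ + t) ^ (-δ) := Real.rpow_nonneg hTt.le _
  have h2d : (2:ℝ) ^ δ ≤ 2 := by
    calc (2:ℝ) ^ δ ≤ (2:ℝ) ^ (1:ℝ) :=
          Real.rpow_le_rpow_of_exponent_le one_le_two (by linarith)
      _ = 2 := Real.rpow_one 2
  have h2dpos : (0:ℝ) < (2:ℝ) ^ δ := Real.rpow_pos_of_pos two_pos δ
  -- half-base identity : ((T₀+t)/2)^(-δ) = 2^δ * (T₀+t)^(-δ)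
  have hhalf : ((T₀ + t) / 2) ^ (-δ) = 2 ^ δ * (T₀ + t) ^ (-δ) := by
    rw [Real.div_rpow hTt.le (by norm_num), Real.rpow_neg (by norm_num : (0:ℝ) ≤ 2),
      div_eq_mul_inv, inv_inv, mul_comm]
  rcases le_total t T₀ with hcase | hcase
  · -- case t ≤ T₀
    have hb : (∫ s in (0:ℝ)..t, (t - s) ^ (-(1 / 2) : ℝ) * (T₀ + s) ^ (-(1 / 2) - δ))
        ≤ ∫ s in (0:ℝ)..t, T₀ ^ (-(1 / 2) - δ) * (t - s) ^ (-(1 / 2) : ℝ) := by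
      apply intervalIntegral.integral_mono_on ht
        (prod_intble le_rfl le_rfl ht hT₀ hδ0.le hδ) ((kernel_intble t 0 t).const_mul _)
      intro s hs
      rw [mul_comm]
      apply mul_le_mul_of_nonneg_right _ (Real.rpow_nonneg (by linarith [hs.2]) _)
      exact Real.rpow_le_rpow_of_nonpos hTpos (by linarith [hs.1]) (by linarith)
    rw [intervalIntegral.integral_const_mul, kernel_val, sub_zero, sub_self,
      Real.zero_rpow (by norm_num : ((1:ℝ)/2) ≠ 0), sub_zero] at hb
    have h5 : t ^ ((1:ℝ)/2) ≤ T₀ ^ ((1:ℝ)/2) := Real.rpow_le_rpow ht hcase (by norm_num)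
    have h6 : T₀ ^ (-(1 / 2) - δ) * T₀ ^ ((1:ℝ)/2) = T₀ ^ (-δ) := by
      rw [← Real.rpow_add hTpos, show (-(1 / 2) - δ + 1 / 2 : ℝ) = -δ by ring]
    have h7 : T₀ ^ (-δ) ≤ ((T₀ + t) / 2) ^ (-δ) :=
      Real.rpow_le_rpow_of_nonpos (by linarith) (by linarith) (by linarith)
    have h8 : (0:ℝ) ≤ T₀ ^ (-(1 / 2) - δ) := Real.rpow_nonneg hTpos.le _
    have h9 : T₀ ^ (-(1 / 2) - δ) * (t ^ ((1:ℝ)/2) / (1 / 2))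
        ≤ T₀ ^ (-(1 / 2) - δ) * (T₀ ^ ((1:ℝ)/2) / (1 / 2)) := by
      apply mul_le_mul_of_nonneg_left _ h8
      exact (div_le_div_iff_of_pos_right (by norm_num)).mpr h5
    have h10 : T₀ ^ (-(1 / 2) - δ) * (T₀ ^ ((1:ℝ)/2) / (1 / 2)) = 2 * T₀ ^ (-δ) := by
      rw [show T₀ ^ (-(1 / 2) - δ) * (T₀ ^ ((1:ℝ)/2) / (1 / 2))
          = (T₀ ^ (-(1 / 2) - δ) * T₀ ^ ((1:ℝ)/2)) * 2 by ring, h6]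
      ring
    rw [hhalf] at h7
    calc (∫ s in (0:ℝ)..t, (t - s) ^ (-(1 / 2) : ℝ) * (T₀ + s) ^ (-(1 / 2) - δ))
        ≤ T₀ ^ (-(1 / 2) - δ) * (t ^ ((1:ℝ)/2) / (1 / 2)) := hb
      _ ≤ T₀ ^ (-(1 / 2) - δ) * (T₀ ^ ((1:ℝ)/2) / (1 / 2)) := h9
      _ = 2 * T₀ ^ (-δ) := h10
      _ ≤ 2 * (2 ^ δ * (T₀ + t) ^ (-δ)) := by nlinarith
      _ ≤ (4 + 2 / (1 / 2 - δ)) * (T₀ + t) ^ (-δ) := by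
          have : (0:ℝ) < 2 / (1 / 2 - δ) := by positivity
          nlinarith
  · -- case T₀ ≤ t
    have ht1 : (1:ℝ) ≤ t := le_trans hT₀ hcase
    have htpos : (0:ℝ) < t := by linarith
    have hI1 := prod_intble (t := t) (T₀ := T₀) (δ := δ) le_rfl (by linarith : t/2 ≤ t)
      (by linarith : (0:ℝ) ≤ t/2) hT₀ hδ0.le hδ
    have hI2 := prod_intble (t := t) (T₀ := T₀) (δ := δ) (by linarith : (0:ℝ) ≤ t/2)
      le_rfl (by linarith : t/2 ≤ t) hT₀ hδ0.le hδ
    have hadd := intervalIntegral.integral_add_adjacent_intervals hI1 hI2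
    -- Piece A
    have hA : (∫ s in (0:ℝ)..(t/2), (t - s) ^ (-(1 / 2) : ℝ) * (T₀ + s) ^ (-(1 / 2) - δ))
        ≤ ∫ s in (0:ℝ)..(t/2), (t/2) ^ (-(1 / 2) : ℝ) * (T₀ + s) ^ (-(1 / 2) - δ) := by
      apply intervalIntegral.integral_mono_on (by linarith) hI1
        ((weight_intble T₀ 0 (t/2) _ (by linarith)).const_mul _)
      intro s hs
      apply mul_le_mul_of_nonneg_right _ (Real.rpow_nonneg (by linarith [hs.1]) _)
      exact Real.rpow_le_rpow_of_nonpos (by linarith) (by linarith [hs.2]) (by norm_num)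
    rw [intervalIntegral.integral_const_mul,
      weight_val T₀ 0 (t/2) (-(1 / 2) - δ) (by linarith), add_zero,
      show (-(1 / 2) - δ + 1 : ℝ) = 1/2 - δ by ring] at hA
    -- bound the ingredients of piece A
    have hA2 : (t/2) ^ (-(1 / 2) : ℝ)
        * (((T₀ + t/2) ^ ((1:ℝ)/2 - δ) - T₀ ^ ((1:ℝ)/2 - δ)) / (1/2 - δ))
        ≤ (2 * (T₀ + t) ^ (-δ)) / (1/2 - δ) := by
      have k1 : (T₀ + t/2) ^ ((1:ℝ)/2 - δ) ≤ (T₀ + t) ^ ((1:ℝ)/2 - δ) :=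
        Real.rpow_le_rpow (by linarith) (by linarith) (by linarith)
      have k2 : (t/2) ^ (-(1 / 2) : ℝ) ≤ ((T₀ + t)/4) ^ (-(1 / 2) : ℝ) :=
        Real.rpow_le_rpow_of_nonpos (by positivity) (by linarith) (by norm_num)
      have k3 : ((T₀ + t)/4) ^ (-(1 / 2) : ℝ) = 2 * (T₀ + t) ^ (-(1 / 2) : ℝ) := by
        rw [Real.div_rpow hTt.le (by norm_num : (0:ℝ) ≤ 4),
          show (-(1 / 2) : ℝ) = -((1:ℝ)/2) by norm_num,
          Real.rpow_neg (by norm_num : (0:ℝ) ≤ 4) ((1:ℝ)/2),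
          four_rpow_half, div_eq_mul_inv, inv_inv]
        ring
      have k4 : (T₀ + t) ^ (-(1 / 2) : ℝ) * (T₀ + t) ^ ((1:ℝ)/2 - δ) = (T₀ + t) ^ (-δ) := by
        rw [← Real.rpow_add hTt, show (-(1/2) + (1/2 - δ) : ℝ) = -δ by ring]
      have k5 : (0:ℝ) ≤ (t/2) ^ (-(1 / 2) : ℝ) := Real.rpow_nonneg (by linarith) _
      have k6 : (0:ℝ) ≤ T₀ ^ ((1:ℝ)/2 - δ) := Real.rpow_nonneg hTpos.le _
      have k7 : (t/2) ^ (-(1 / 2) : ℝ) * ((T₀ + t/2) ^ ((1:ℝ)/2 - δ) - T₀ ^ ((1:ℝ)/2 - δ))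
          ≤ 2 * (T₀ + t) ^ (-δ) := by
        calc (t/2) ^ (-(1 / 2) : ℝ) * ((T₀ + t/2) ^ ((1:ℝ)/2 - δ) - T₀ ^ ((1:ℝ)/2 - δ))
            ≤ (t/2) ^ (-(1 / 2) : ℝ) * (T₀ + t/2) ^ ((1:ℝ)/2 - δ) := by nlinarith
          _ ≤ ((T₀ + t)/4) ^ (-(1 / 2) : ℝ) * (T₀ + t) ^ ((1:ℝ)/2 - δ) := by
              apply mul_le_mul k2 k1 (Real.rpow_nonneg (by linarith) _)
                (Real.rpow_nonneg (by positivity) _)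
          _ = 2 * ((T₀ + t) ^ (-(1 / 2) : ℝ) * (T₀ + t) ^ ((1:ℝ)/2 - δ)) := by
              rw [k3]; ring
          _ = 2 * (T₀ + t) ^ (-δ) := by rw [k4]
      calc (t/2) ^ (-(1 / 2) : ℝ)
          * (((T₀ + t/2) ^ ((1:ℝ)/2 - δ) - T₀ ^ ((1:ℝ)/2 - δ)) / (1/2 - δ))
          = ((t/2) ^ (-(1 / 2) : ℝ)
            * ((T₀ + t/2) ^ ((1:ℝ)/2 - δ) - T₀ ^ ((1:ℝ)/2 - δ))) / (1/2 - δ) := by ring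
        _ ≤ (2 * (T₀ + t) ^ (-δ)) / (1/2 - δ) := by
            exact (div_le_div_iff_of_pos_right hd2).mpr k7
    -- Piece B
    have hB : (∫ s in (t/2)..t, (t - s) ^ (-(1 / 2) : ℝ) * (T₀ + s) ^ (-(1 / 2) - δ))
        ≤ ∫ s in (t/2)..t, (T₀ + t/2) ^ (-(1 / 2) - δ) * (t - s) ^ (-(1 / 2) : ℝ) := by
      apply intervalIntegral.integral_mono_on (by linarith) hI2
        ((kernel_intble t (t/2) t).const_mul _)
      intro s hs
      rw [mul_comm]
      apply mul_le_mul_of_nonneg_right _ (Real.rpow_nonneg (by linarith [hs.2]) _)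
      exact Real.rpow_le_rpow_of_nonpos (by linarith) (by linarith [hs.1]) (by linarith)
    rw [intervalIntegral.integral_const_mul, kernel_val, sub_self,
      Real.zero_rpow (by norm_num : ((1:ℝ)/2) ≠ 0), sub_zero,
      show t - t/2 = t/2 by ring] at hB
    have hB2 : (T₀ + t/2) ^ (-(1 / 2) - δ) * ((t/2) ^ ((1:ℝ)/2) / (1/2))
        ≤ 4 * (T₀ + t) ^ (-δ) := by
      have upos : (0:ℝ) < (T₀ + t)/2 := by positivity
      have b1 : (T₀ + t/2) ^ (-(1 / 2) - δ) ≤ ((T₀ + t)/2) ^ (-(1 / 2) - δ) :=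
        Real.rpow_le_rpow_of_nonpos upos (by linarith) (by linarith)
      have b2 : (t/2) ^ ((1:ℝ)/2) ≤ ((T₀ + t)/2) ^ ((1:ℝ)/2) :=
        Real.rpow_le_rpow (by linarith) (by linarith) (by norm_num)
      have b3 : ((T₀ + t)/2) ^ (-(1 / 2) - δ) * ((T₀ + t)/2) ^ ((1:ℝ)/2)
          = ((T₀ + t)/2) ^ (-δ) := by
        rw [← Real.rpow_add upos, show (-(1/2) - δ + 1/2 : ℝ) = -δ by ring]
      calc (T₀ + t/2) ^ (-(1 / 2) - δ) * ((t/2) ^ ((1:ℝ)/2) / (1/2))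
          = (T₀ + t/2) ^ (-(1 / 2) - δ) * (t/2) ^ ((1:ℝ)/2) * 2 := by ring
        _ ≤ ((T₀ + t)/2) ^ (-(1 / 2) - δ) * ((T₀ + t)/2) ^ ((1:ℝ)/2) * 2 := by
            have := mul_le_mul b1 b2 (Real.rpow_nonneg (by linarith) _)
              (Real.rpow_nonneg upos.le _)
            linarith
        _ = 2 * ((T₀ + t)/2) ^ (-δ) := by rw [b3]; ring
        _ = 2 * (2 ^ δ * (T₀ + t) ^ (-δ)) := by rw [hhalf]
        _ ≤ 4 * (T₀ + t) ^ (-δ) := by nlinarith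
    have hfin : (∫ s in (0:ℝ)..t, (t - s) ^ (-(1 / 2) : ℝ) * (T₀ + s) ^ (-(1 / 2) - δ))
        ≤ (2 * (T₀ + t) ^ (-δ)) / (1/2 - δ) + 4 * (T₀ + t) ^ (-δ) := by
      rw [← hadd]
      have := le_trans hA hA2
      have := le_trans hB hB2
      linarith
    calc (∫ s in (0:ℝ)..t, (t - s) ^ (-(1 / 2) : ℝ) * (T₀ + s) ^ (-(1 / 2) - δ))
        ≤ (2 * (T₀ + t) ^ (-δ)) / (1/2 - δ) + 4 * (T₀ + t) ^ (-δ) := hfin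
      _ = (4 + 2 / (1 / 2 - δ)) * (T₀ + t) ^ (-δ) := by field_simp; ring
end

section
/- Exponential decay of positive decaying solutions of the soliton equation: Let d ≥ 1 and λ > 0. Let V : ℝ^d → ℝ be continuous with V(x) → 0 as ‖x‖ → ∞, and let f : ℝ → ℝ be continuous with f(0) = 0. Suppose φ : ℝ^d → ℝ is twice continuously differentiable, φ(x) > 0 for all x, φ(x) → 0 as ‖x‖ → ∞, and φ satisfies −Δφ(x) + (λ + V(x)) φ(x) − f(φ(x)²) φ(x) = 0 for all x ∈ ℝ^d. Then there exist constants c > 0 and δ > 0 such that 0 < φ(x) ≤ c e^{−δ‖x‖} for all x ∈ ℝ^d. -/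
/-!
Outside a large ball the equation gives `Δφ ≥ δ²φ` with `δ² = λ/2`, because `V` and `f(φ²)` tend
to `0`. For `‖u‖ ≤ 1` the function `ψ(y) = c·exp(-δ⟪u, y⟫)` satisfies `Δψ = δ²‖u‖²ψ ≤ δ²ψ`, and for
`c` large it dominates `φ` on the ball. So `φ - ψ`, which is eventually `< ε` at infinity, cannot
take a positive value: it would then have a positive global maximum, necessarily outside the ball,
where `Δ(φ - ψ) ≥ δ²(φ - ψ) > 0` contradicts the second derivative test. Choosing `u = x/‖x‖`
gives `φ(x) ≤ c·exp(-δ‖x‖)`.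
-/

open Filter

/-- The Laplacian: sum of second partial derivatives in the coordinate directions. -/
noncomputable def lap {d : ℕ} {F : Type} [NormedAddCommGroup F] [NormedSpace ℝ F]
    (g : EuclideanSpace ℝ (Fin d) → F) (x : EuclideanSpace ℝ (Fin d)) : F :=
  ∑ k : Fin d, fderiv ℝ (fun y => fderiv ℝ g y (EuclideanSpace.single k 1)) x
    (EuclideanSpace.single k 1)

open Topology Real

theorem IsLocalMax.deriv_deriv_nonpos {f : ℝ → ℝ} {x₀ : ℝ} (hmax : IsLocalMax f x₀)
    (hc : ContinuousAt f x₀) : deriv (deriv f) x₀ ≤ 0 := by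
  by_contra! hpos
  have hmin := isLocalMin_of_deriv_deriv_pos hpos hmax.deriv_eq_zero hc
  have hconst : f =ᶠ[𝓝 x₀] fun _ => f x₀ := by
    filter_upwards [hmax, hmin] with x hle hge using le_antisymm hle hge
  rw [hconst.deriv.deriv_eq] at hpos
  simp at hpos

theorem nonpos_of_forall_pos_not_isLocalMax {X : Type*} [TopologicalSpace X] {w : X → ℝ}
    (hw : Continuous w) (hinf : ∀ ε > 0, ∀ᶠ x in cocompact X, w x < ε)
    (hloc : ∀ x, 0 < w x → ¬IsLocalMax w x) (x : X) : w x ≤ 0 := by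
  by_contra! hx
  obtain ⟨x₀, hx₀⟩ := hw.exists_forall_ge' x ((hinf _ hx).mono fun _ h => h.le)
  exact hloc x₀ (hx.trans_le (hx₀ x)) ((isMaxOn_univ_iff.2 hx₀).isLocalMax univ_mem)

theorem ContDiff.differentiable_fderiv_apply {𝕜 E F : Type*} [NontriviallyNormedField 𝕜]
    [NormedAddCommGroup E] [NormedSpace 𝕜 E] [NormedAddCommGroup F] [NormedSpace 𝕜 F]
    {f : E → F} (hf : ContDiff 𝕜 2 f) (e : E) : Differentiable 𝕜 fun y => fderiv 𝕜 f y e :=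
  ((hf.fderiv_right (m := 1) (by norm_num)).differentiable one_ne_zero).clm_apply
    (differentiable_const e)

section

variable {d : ℕ}

theorem lap_sub {F : Type} [NormedAddCommGroup F] [NormedSpace ℝ F]
    {f g : EuclideanSpace ℝ (Fin d) → F} (hf : ContDiff ℝ 2 f) (hg : ContDiff ℝ 2 g)
    (x : EuclideanSpace ℝ (Fin d)) : lap (fun y => f y - g y) x = lap f x - lap g x := by
  simp only [lap, ← Finset.sum_sub_distrib]
  refine Finset.sum_congr rfl fun k _ => ?_
  set e : EuclideanSpace ℝ (Fin d) := EuclideanSpace.single k 1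
  have h : (fun y => fderiv ℝ (fun y => f y - g y) y e) =
      fun y => fderiv ℝ f y e - fderiv ℝ g y e :=
    funext fun y => by
      rw [fderiv_fun_sub (hf.differentiable two_ne_zero y) (hg.differentiable two_ne_zero y)]
      rfl
  rw [h, fderiv_fun_sub (hf.differentiable_fderiv_apply _ x) (hg.differentiable_fderiv_apply _ x)]
  rfl

theorem lap_nonpos_of_isLocalMax {w : EuclideanSpace ℝ (Fin d) → ℝ} {x₀ : EuclideanSpace ℝ (Fin d)}
    (hw : ContDiff ℝ 2 w) (hmax : IsLocalMax w x₀) : lap w x₀ ≤ 0 := by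
  refine Finset.sum_nonpos fun k _ => ?_
  set e : EuclideanSpace ℝ (Fin d) := EuclideanSpace.single k 1
  have hline : ∀ t : ℝ, HasDerivAt (fun s : ℝ => x₀ + s • e) e t := fun t => by
    simpa using ((hasDerivAt_id t).smul_const e).const_add x₀
  have hderiv : deriv (fun t : ℝ => w (x₀ + t • e)) = fun t => fderiv ℝ w (x₀ + t • e) e :=
    funext fun t =>
      ((hw.differentiable two_ne_zero _).hasFDerivAt.comp_hasDerivAt t (hline t)).deriv
  have hderiv2 : deriv (deriv fun t : ℝ => w (x₀ + t • e)) 0 =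
      fderiv ℝ (fun y => fderiv ℝ w y e) x₀ e := by
    rw [hderiv]
    have := (hw.differentiable_fderiv_apply e (x₀ + (0 : ℝ) • e)).hasFDerivAt.comp_hasDerivAt 0
      (hline 0)
    simpa [Function.comp_def] using this.deriv
  have hcont : Continuous fun t : ℝ => x₀ + t • e := by fun_prop
  rw [← hderiv2]
  refine IsLocalMax.deriv_deriv_nonpos ?_ (hw.continuous.comp hcont).continuousAt
  exact IsLocalMax.comp_continuous (by simpa using hmax) hcont.continuousAt

theorem lap_const_mul_exp_inner (c : ℝ) (v x : EuclideanSpace ℝ (Fin d)) :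
    lap (fun y => c * exp (inner ℝ v y)) x = ‖v‖ ^ 2 * (c * exp (inner ℝ v x)) := by
  have hfd : ∀ (a : ℝ) (y e : EuclideanSpace ℝ (Fin d)),
      fderiv ℝ (fun y => a * exp (inner ℝ v y)) y e =
        a * inner ℝ v e * exp (inner ℝ v y) := by
    intro a y e
    have hinner : HasFDerivAt (fun y => inner ℝ v y) (innerSL ℝ v) y := (innerSL ℝ v).hasFDerivAt
    rw [(hinner.exp.const_mul a).fderiv]
    simp only [smul_apply, coe_innerSL_apply, smul_eq_mul]
    ring
  simp only [lap, hfd]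
  simp only [EuclideanSpace.inner_single_right, EuclideanSpace.real_norm_sq_eq, Finset.sum_mul]
  refine Finset.sum_congr rfl fun k _ => ?_
  simp only [one_mul, conj_trivial]
  ring

theorem le_mul_exp_neg_inner_of_lap_ge {φ : EuclideanSpace ℝ (Fin d) → ℝ} (hφ : ContDiff ℝ 2 φ)
    (hφdecay : Tendsto φ (cocompact _) (𝓝 0)) {δ R M : ℝ} (hδ : 0 < δ) (hM₀ : 0 ≤ M)
    (hM : ∀ x, φ x ≤ M) (hlap : ∀ x, R < ‖x‖ → δ ^ 2 * φ x ≤ lap φ x)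
    {u : EuclideanSpace ℝ (Fin d)} (hu : ‖u‖ ≤ 1) (x : EuclideanSpace ℝ (Fin d)) :
    φ x ≤ M * exp (δ * R) * exp (-δ * inner ℝ u x) := by
  set ψ : EuclideanSpace ℝ (Fin d) → ℝ := fun y => M * exp (δ * R) * exp (inner ℝ (-δ • u) y)
  have hψ_eq : ∀ y, ψ y = M * exp (δ * R) * exp (-δ * inner ℝ u y) := fun y => by
    simp [ψ, real_inner_smul_left]
  have hψ_nonneg : ∀ y, 0 ≤ ψ y := fun y => by positivity
  have hψ : ContDiff ℝ 2 ψ := contDiff_const.mul (innerSL ℝ (-δ • u)).contDiff.exp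
  have hlapψ : ∀ y, lap ψ y ≤ δ ^ 2 * ψ y := fun y => by
    have h := lap_const_mul_exp_inner (M * exp (δ * R)) (-δ • u) y
    rw [norm_smul, Real.norm_eq_abs, abs_neg, abs_of_pos hδ, mul_pow] at h
    change lap ψ y = _ * ψ y at h
    rw [h, mul_assoc]
    exact mul_le_mul_of_nonneg_left
      (mul_le_of_le_one_left (hψ_nonneg y) (pow_le_one₀ (norm_nonneg u) hu)) (sq_nonneg δ)
  have hball : ∀ y, ‖y‖ ≤ R → φ y ≤ ψ y := fun y hy => by
    have hinner : inner ℝ u y ≤ R := by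
      calc inner ℝ u y ≤ ‖u‖ * ‖y‖ := real_inner_le_norm u y
        _ ≤ ‖y‖ := mul_le_of_le_one_left (norm_nonneg y) hu
        _ ≤ R := hy
    rw [hψ_eq, mul_assoc, ← exp_add]
    exact (hM y).trans (le_mul_of_one_le_right hM₀ (one_le_exp (by nlinarith)))
  suffices ∀ y, φ y - ψ y ≤ 0 by simpa [hψ_eq, sub_nonpos] using this x
  refine nonpos_of_forall_pos_not_isLocalMax (hφ.continuous.sub hψ.continuous)
    (fun ε hε => ?_) (fun y hy hmax => ?_)
  · filter_upwards [hφdecay.eventually (gt_mem_nhds hε)] with y hy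
    linarith [hψ_nonneg y]
  · have hyR : R < ‖y‖ := by
      by_contra! hyR
      linarith [hball y hyR]
    have := lap_nonpos_of_isLocalMax (hφ.sub hψ) hmax
    rw [lap_sub hφ hψ] at this
    nlinarith [hlap y hyR, hlapψ y, mul_pos (pow_pos hδ 2) hy]

theorem le_mul_exp_neg_norm_of_lap_ge {φ : EuclideanSpace ℝ (Fin d) → ℝ} (hφ : ContDiff ℝ 2 φ)
    (hφdecay : Tendsto φ (cocompact _) (𝓝 0)) {δ R M : ℝ} (hδ : 0 < δ) (hM₀ : 0 ≤ M)
    (hM : ∀ x, φ x ≤ M) (hlap : ∀ x, R < ‖x‖ → δ ^ 2 * φ x ≤ lap φ x)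
    (x : EuclideanSpace ℝ (Fin d)) : φ x ≤ M * exp (δ * R) * exp (-δ * ‖x‖) := by
  -- at `x = 0` the junk value `0⁻¹ = 0` gives `u = 0`, which the directional bound still covers
  have hu : ‖(‖x‖⁻¹ • x)‖ ≤ 1 := by
    rw [norm_smul, norm_inv, norm_norm]
    exact inv_mul_le_one_of_le₀ le_rfl (norm_nonneg x)
  have hinner : inner ℝ (‖x‖⁻¹ • x) x = ‖x‖ := by
    rw [real_inner_smul_left, real_inner_self_eq_norm_sq]
    rcases eq_or_ne ‖x‖ 0 with h | h
    · simp [h]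
    · field_simp
  simpa [hinner] using le_mul_exp_neg_inner_of_lap_ge hφ hφdecay hδ hM₀ hM hlap hu x

end

theorem soliton_exponential_decay_general (d : ℕ) (lam : ℝ) (hlam : 0 < lam)
    (V : EuclideanSpace ℝ (Fin d) → ℝ)
    (hVdecay : Tendsto V (cocompact (EuclideanSpace ℝ (Fin d))) (nhds 0))
    (f : ℝ → ℝ) (hf : Continuous f) (hf0 : f 0 = 0)
    (φ : EuclideanSpace ℝ (Fin d) → ℝ) (hφ : ContDiff ℝ 2 φ)
    (hφpos : ∀ x, 0 < φ x)
    (hφdecay : Tendsto φ (cocompact (EuclideanSpace ℝ (Fin d))) (nhds 0))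
    (heq : ∀ x : EuclideanSpace ℝ (Fin d),
      -lap φ x + (lam + V x) * φ x - f (φ x ^ 2) * φ x = 0) :
    ∃ c : ℝ, 0 < c ∧ ∃ δ : ℝ, 0 < δ ∧
      ∀ x : EuclideanSpace ℝ (Fin d), φ x ≤ c * Real.exp (-δ * ‖x‖) := by
  have hfφ : Tendsto (fun x => f (φ x ^ 2)) (cocompact _) (𝓝 0) := by
    simpa [hf0, Function.comp_def] using (hf.tendsto 0).comp (by simpa using hφdecay.pow 2)
  obtain ⟨R, hR⟩ : ∃ R, ∀ x : EuclideanSpace ℝ (Fin d), R < ‖x‖ →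
      -(lam / 2) < V x - f (φ x ^ 2) := by
    have := (hVdecay.sub hfφ).eventually (lt_mem_nhds (show -(lam / 2) < 0 - 0 by linarith))
    rw [← Metric.cobounded_eq_cocompact, ← comap_norm_atTop, eventually_comap,
      eventually_atTop] at this
    obtain ⟨R, hR⟩ := this
    exact ⟨R, fun x hx => hR _ hx.le x rfl⟩
  obtain ⟨xm, hxm⟩ :=
    hφ.continuous.exists_forall_ge' 0 (hφdecay.eventually (ge_mem_nhds (hφpos 0)))
  have hδ : 0 < √(lam / 2) := by positivity
  refine ⟨φ xm * exp (√(lam / 2) * R), mul_pos (hφpos xm) (exp_pos _), √(lam / 2), hδ,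
    le_mul_exp_neg_norm_of_lap_ge hφ hφdecay hδ (hφpos xm).le hxm fun x hx => ?_⟩
  have hlap : lap φ x = (lam + V x - f (φ x ^ 2)) * φ x := by linear_combination -heq x
  rw [hlap, sq_sqrt (by positivity)]
  nlinarith [hR x hx, hφpos x]

/-- Exponential decay of positive decaying solutions of the soliton equation
`-Δφ + (λ+V)φ - f(φ²)φ = 0` with `λ > 0`, `V → 0` at infinity and `f(0) = 0`:
there are `c, δ > 0` with `0 < φ(x) ≤ c e^{-δ‖x‖}`. -/
theorem soliton_exponential_decay (d : ℕ) (hd : 1 ≤ d) (lam : ℝ) (hlam : 0 < lam)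
    (V : EuclideanSpace ℝ (Fin d) → ℝ) (hV : Continuous V)
    (hVdecay : Tendsto V (cocompact (EuclideanSpace ℝ (Fin d))) (nhds 0))
    (f : ℝ → ℝ) (hf : Continuous f) (hf0 : f 0 = 0)
    (φ : EuclideanSpace ℝ (Fin d) → ℝ) (hφ : ContDiff ℝ 2 φ)
    (hφpos : ∀ x, 0 < φ x)
    (hφdecay : Tendsto φ (cocompact (EuclideanSpace ℝ (Fin d))) (nhds 0))
    (heq : ∀ x : EuclideanSpace ℝ (Fin d),
      -lap φ x + (lam + V x) * φ x - f (φ x ^ 2) * φ x = 0) :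
    ∃ c : ℝ, 0 < c ∧ ∃ δ : ℝ, 0 < δ ∧
      ∀ x : EuclideanSpace ℝ (Fin d), φ x ≤ c * Real.exp (-δ * ‖x‖) :=
  soliton_exponential_decay_general d lam hlam V hVdecay f hf hf0 φ hφ hφpos hφdecay heq
end
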